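/- For every integer k ≥ 2, the definite-integral identity ∫_{−1}^{1} G_k(x)/(x²+1) dx = b_{k−2}/2 − π a_k/4 holds, where G_k(x) := 2^{−k} Σ_{j=0}^{⌊(k−1)/2⌋} C(k,j) x^{k−2j}, a_k := 2^{−k} C(k,k/2) for even k and 0 for odd k, and b_m := ∫_{−1}^{1} G_{m+1}(x)/x dx (a well-defined integral of a polynomial, since G_{m+1}(x)/x is a polynomial for even m and the integral is 0 for odd m). -/

import Mathlib

/-- `a n = binomial(n, n/2)/2^n` for even `n`, and `0` for odd `n`, as a real number. -/
noncomputable def a (n : ℕ) : ℝ := if Even n then (n.choose (n / 2) : ℝ) / 2 ^ n else 0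

/-- `G 0 = 0` and `G n x = 2^{-n} Σ_{j=0}^{⌊(n-1)/2⌋} C(n,j) x^{n-2j}` for `n ≥ 1`. -/
noncomputable def G (n : ℕ) (x : ℝ) : ℝ :=
  if n = 0 then 0 else
    (1 / 2 ^ n) * ∑ j ∈ Finset.range ((n - 1) / 2 + 1), (n.choose j : ℝ) * x ^ (n - 2 * j)

/-- `b m = ∫_{-1}^1 G_{m+1}(x)/x dx`. -/
noncomputable def b (m : ℕ) : ℝ := ∫ x in (-1 : ℝ)..1, G (m + 1) x / x

/-!
`G n x` is the part of `((x + x⁻¹) / 2) ^ n` with positive powers of `x` and `a n` its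
constant term; comparing with `(x + x⁻¹) / 2 * ((x + x⁻¹) / 2) ^ (k - 1)` (concretely, by
Pascal's rule) gives `(x² + 1) G_{k-1}(x) = 2x G_k(x) + a_k x - a_{k-1} x²`. Hence
`G_k(x) / (x² + 1)` splits into `G_{k-1}(x) / (2x)`, whose integral is `b_{k-2} / 2`, the
multiple `a_k / 2` of `1 / (1 + x²)`, whose integral over `[-1, 1]` is `π / 2`, and a multiple
of the odd function `x / (x² + 1)`.
-/

open Finset MeasureTheory

theorem intervalIntegral.integral_eq_zero_of_odd {E : Type*} [NormedAddCommGroup E]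
    [NormedSpace ℝ E] {f : ℝ → E} (hf : ∀ x, f (-x) = -f x) (c : ℝ) :
    ∫ x in -c..c, f x = 0 := by
  have h := intervalIntegral.integral_comp_neg (a := -c) (b := c) f
  simp only [hf, intervalIntegral.integral_neg, neg_neg] at h
  have h2 : (2 : ℝ) • ∫ x in -c..c, f x = 0 := by
    rw [two_smul]; nth_rewrite 1 [← h]; exact neg_add_cancel _
  exact (smul_eq_zero.mp h2).resolve_left two_ne_zero

section binomSum

variable {R : Type*} [CommRing R]

def binomSum (n m : ℕ) (x : R) : R :=
  ∑ j ∈ range (m + 1), (n.choose j : R) * x ^ (n - 2 * j)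

theorem binomSum_succ (n m : ℕ) (x : R) :
    binomSum n (m + 1) x = binomSum n m x + n.choose (m + 1) * x ^ (n - 2 * (m + 1)) :=
  sum_range_succ _ _

theorem sq_add_one_mul_binomSum {n m : ℕ} (h : 2 * m ≤ n) (x : R) :
    (x ^ 2 + 1) * binomSum n m x = x * binomSum (n + 1) m x + n.choose m * x ^ (n - 2 * m) := by
  induction m with
  | zero => simp [binomSum]; ring
  | succ m ih =>
    have hx : x * x ^ (n + 1 - 2 * (m + 1)) = x ^ (n - 2 * m) := by
      rw [← pow_succ']; congr 1; omega
    have hx2 : x ^ 2 * x ^ (n - 2 * (m + 1)) = x ^ (n - 2 * m) := by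
      rw [← pow_add]; congr 1; omega
    rw [binomSum_succ, binomSum_succ, mul_add, ih (by omega), Nat.choose_succ_succ]
    push_cast
    linear_combination (n.choose (m + 1) : R) * hx2 - ((n.choose m : R) + n.choose (m + 1)) * hx

end binomSum

theorem G_eq_binomSum {n : ℕ} (hn : n ≠ 0) (x : ℝ) :
    G n x = binomSum n ((n - 1) / 2) x / 2 ^ n := by
  rw [G, if_neg hn, binomSum, one_div_mul_eq_div]

theorem a_eq_zero_of_odd {n : ℕ} (hn : Odd n) : a n = 0 :=
  if_neg (Nat.not_even_iff_odd.mpr hn)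

theorem a_two_mul_add_two (s : ℕ) :
    a (2 * s + 2) = (2 * s + 2).choose (s + 1) / 2 ^ (2 * s + 2) := by
  rw [a, if_pos (by simp [parity_simps])]
  congr 3
  omega

theorem sq_add_one_mul_G_two_mul_add_one (s : ℕ) (x : ℝ) :
    (x ^ 2 + 1) * G (2 * s + 1) x = 2 * x * G (2 * s + 2) x + a (2 * s + 2) * x := by
  have hpascal : (x ^ 2 + 1) * binomSum (2 * s + 1) s x
      = x * binomSum (2 * s + 2) s x + (2 * s + 1).choose s * x := by
    have := sq_add_one_mul_binomSum (n := 2 * s + 1) (m := s) (by omega) x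
    rwa [show 2 * s + 1 - 2 * s = 1 by omega, pow_one] at this
  have hchoose : ((2 * s + 2).choose (s + 1) : ℝ) = 2 * (2 * s + 1).choose s := by
    rw [Nat.choose_succ_succ, Nat.choose_symm_half]; push_cast; ring
  rw [G_eq_binomSum (by omega), G_eq_binomSum (by omega), a_two_mul_add_two, hchoose,
    show (2 * s + 1 - 1) / 2 = s by omega, show (2 * s + 2 - 1) / 2 = s by omega,
    pow_succ _ (2 * s + 1)]
  linear_combination hpascal / 2 ^ (2 * s + 1)

theorem sq_add_one_mul_G_two_mul_add_two (s : ℕ) (x : ℝ) :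
    (x ^ 2 + 1) * G (2 * s + 2) x = 2 * x * G (2 * s + 3) x - a (2 * s + 2) * x ^ 2 := by
  have hpascal : (x ^ 2 + 1) * binomSum (2 * s + 2) s x
      = x * binomSum (2 * s + 3) s x + (2 * s + 2).choose s * x ^ 2 := by
    have := sq_add_one_mul_binomSum (n := 2 * s + 2) (m := s) (by omega) x
    rwa [show 2 * s + 2 - 2 * s = 2 by omega] at this
  have hsucc : binomSum (2 * s + 3) (s + 1) x
      = binomSum (2 * s + 3) s x + (2 * s + 3).choose (s + 1) * x := by
    rw [binomSum_succ, show 2 * s + 3 - 2 * (s + 1) = 1 by omega, pow_one]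
  have hchoose : ((2 * s + 3).choose (s + 1) : ℝ)
      = (2 * s + 2).choose s + (2 * s + 2).choose (s + 1) := by
    rw [Nat.choose_succ_succ]; push_cast; ring
  rw [G_eq_binomSum (by omega), G_eq_binomSum (by omega), a_two_mul_add_two,
    show (2 * s + 2 - 1) / 2 = s by omega, show (2 * s + 3 - 1) / 2 = s + 1 by omega,
    hsucc, hchoose, pow_succ _ (2 * s + 2)]
  linear_combination hpascal / 2 ^ (2 * s + 2)

theorem sq_add_one_mul_G (m : ℕ) (x : ℝ) :
    (x ^ 2 + 1) * G (m + 1) x = 2 * x * G (m + 2) x + a (m + 2) * x - a (m + 1) * x ^ 2 := by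
  obtain ⟨s, rfl | rfl⟩ := Nat.even_or_odd' m
  · rw [a_eq_zero_of_odd (odd_two_mul_add_one s), sq_add_one_mul_G_two_mul_add_one]; ring
  · rw [a_eq_zero_of_odd (show Odd (2 * s + 1 + 2) by simp [parity_simps]),
      sq_add_one_mul_G_two_mul_add_two]; ring

theorem exists_continuous_G_eq_mul (n : ℕ) :
    ∃ Q : ℝ → ℝ, Continuous Q ∧ ∀ x, G n x = x * Q x := by
  rcases eq_or_ne n 0 with rfl | hn
  · exact ⟨0, continuous_const, fun x => by simp [G]⟩
  refine ⟨fun x => (∑ j ∈ range ((n - 1) / 2 + 1), (n.choose j : ℝ) * x ^ (n - 2 * j - 1)) /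
    2 ^ n, by fun_prop, fun x => ?_⟩
  rw [G_eq_binomSum hn, binomSum, mul_div_assoc', mul_sum]
  congr 1
  refine sum_congr rfl fun j hj => ?_
  have hexp : n - 2 * j = n - 2 * j - 1 + 1 := by
    have := mem_range.mp hj
    omega
  rw [hexp, pow_succ', Nat.add_sub_cancel]
  ring

theorem intervalIntegrable_G_div_self (n : ℕ) (s t : ℝ) :
    IntervalIntegrable (fun x => G n x / x) volume s t := by
  obtain ⟨Q, hQ, hGQ⟩ := exists_continuous_G_eq_mul n
  refine (hQ.intervalIntegrable s t).congr_ae (ae_restrict_of_ae ?_)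
  filter_upwards [volume.ae_ne 0] with x hx
  rw [hGQ, mul_div_cancel_left₀ _ hx]

theorem G_div_sq_add_one (m : ℕ) {x : ℝ} (hx : x ≠ 0) :
    G (m + 2) x / (x ^ 2 + 1)
      = G (m + 1) x / x / 2 - a (m + 2) / 2 * (1 + x ^ 2)⁻¹ +
        a (m + 1) / 2 * (x / (x ^ 2 + 1)) := by
  have hx2 : x ^ 2 + 1 ≠ 0 := by positivity
  rw [add_comm 1 (x ^ 2)]
  field_simp
  linear_combination -sq_add_one_mul_G m x

theorem stmt_13 (k : ℕ) (hk : 2 ≤ k) :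
    (∫ x in (-1 : ℝ)..1, G k x / (x ^ 2 + 1)) = b (k - 2) / 2 - Real.pi * a k / 4 := by
  obtain ⟨m, rfl⟩ := Nat.exists_eq_add_of_le' hk
  have hG := (intervalIntegrable_G_div_self (m + 1) (-1) 1).div_const 2
  have hinv := (intervalIntegral.intervalIntegrable_inv_one_add_sq (μ := volume) (a := -1)
    (b := 1)).const_mul (a (m + 2) / 2)
  have hodd_cont : Continuous fun x : ℝ => x / (x ^ 2 + 1) :=
    continuous_id.div (by fun_prop) fun x => by positivity
  have hodd := (hodd_cont.intervalIntegrable (μ := volume) (-1) 1).const_mul (a (m + 1) / 2)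
  have hodd_zero : ∫ x in (-1 : ℝ)..1, x / (x ^ 2 + 1) = 0 :=
    intervalIntegral.integral_eq_zero_of_odd (fun x => by rw [neg_sq, neg_div]) 1
  rw [intervalIntegral.integral_congr_ae (by
      filter_upwards [volume.ae_ne 0] with x hx _ using G_div_sq_add_one m hx),
    intervalIntegral.integral_add (hG.sub hinv) hodd, intervalIntegral.integral_sub hG hinv,
    intervalIntegral.integral_div, intervalIntegral.integral_const_mul,
    intervalIntegral.integral_const_mul, integral_inv_one_add_sq, hodd_zero,
    Real.arctan_neg, Real.arctan_one, Nat.add_sub_cancel, b]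
  ring
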